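/- Suppose c satisfies (A0), (A1), (A2). If for every x_m ∈ Ω and every c-segment [y₀,y₁]_{x_m} lying in Λ there exists a neighborhood U of x_m in Ω such that f_θ(x) ≤ max(f₀(x), f₁(x)) for all θ ∈ [0,1] and all x ∈ U (i.e. DASM holds locally near x_m), then c satisfies (A3W) on Ω × Λ. -/

import Mathlib

open scoped RealInnerProductSpace
open Filter Topology Set

noncomputable section

variable {n : ℕ}

local notation "E" => EuclideanSpace ℝ (Fin n)

/-- `-∇ₓ c(x,y)`, the negative gradient of `x' ↦ c(x',y)` at `x`. -/
def negGradX (c : E → E → ℝ) (x y : E) : E :=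
  -(gradient (fun x' => c x' y) x)

/-- `-∇_y c(x,y)`, the negative gradient of `y' ↦ c(x,y')` at `y`. -/
def negGradY (c : E → E → ℝ) (x y : E) : E :=
  -(gradient (fun y' => c x y') y)

/-- The swapped cost `c*(y,x) = c(x,y)`. -/
def cStar (c : E → E → ℝ) : E → E → ℝ := fun y x => c x y

/-- The domain of the `c`-exponential map at `x`: `{-∇ₓ c(x,y) : y ∈ Λ}`. -/
def cExpDom (c : E → E → ℝ) (Λ : Set E) (x : E) : Set E :=
  (fun y => negGradX c x y) '' Λ

/-- The `c`-exponential map: `cExp c Λ x p` is the point `y ∈ Λ` with `p = -∇ₓ c(x,y)`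
(when it exists and is unique). -/
def cExp (c : E → E → ℝ) (Λ : Set E) (x p : E) : E :=
  Function.invFunOn (fun y => negGradX c x y) Λ p

/-- Condition (A0): the cost extends to a `C⁴` function on `cl Ω × cl Λ`. -/
def A0 (c : E → E → ℝ) (Ω Λ : Set E) : Prop :=
  ContDiffOn ℝ 4 (fun q : E × E => c q.1 q.2) (closure Ω ×ˢ closure Λ)

/-- Condition (A1): injectivity of `y ↦ -∇ₓ c(x,y)` on `cl Λ` and of
`x ↦ -∇_y c(x,y)` on `cl Ω`. -/
def A1 (c : E → E → ℝ) (Ω Λ : Set E) : Prop :=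
  (∀ x ∈ Ω, Set.InjOn (fun y => negGradX c x y) (closure Λ)) ∧
  (∀ y ∈ Λ, Set.InjOn (fun x => negGradY c x y) (closure Ω))

/-- Condition (A2): the mixed second derivative `D²ₓᵧ c(x,y)`, as a linear map, is
invertible for all `(x,y) ∈ cl Ω × cl Λ`. -/
def A2 (c : E → E → ℝ) (Ω Λ : Set E) : Prop :=
  ∀ x ∈ closure Ω, ∀ y ∈ closure Λ,
    Function.Bijective (fderiv ℝ (fun y' => negGradX c x y') y)

/-- The `c`-sectional curvature
`𝔖_c(x,y)(η,ξ) = (d²/dt²)|₀ [-D²ₓₓ c](x, cExpₓ(p + tξ))(η,η)` with `p = -∇ₓ c(x,y)`. -/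
def cSectional (c : E → E → ℝ) (Λ : Set E) (x y η ξ : E) : ℝ :=
  deriv (deriv (fun t : ℝ =>
    -(iteratedFDeriv ℝ 2
        (fun x' => c x' (cExp c Λ x (negGradX c x y + t • ξ))) x ![η, η]))) 0

/-- Condition (A3W): nonnegative `c`-sectional curvature in orthogonal directions. -/
def A3W (c : E → E → ℝ) (Ω Λ : Set E) : Prop :=
  ∀ x ∈ Ω, ∀ y ∈ Λ, ∀ η ξ : E, ⟪η, ξ⟫ = 0 → 0 ≤ cSectional c Λ x y η ξ

/-- Condition (A3S): uniformly positive `c`-sectional curvature in orthogonal directions. -/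
def A3S (c : E → E → ℝ) (Ω Λ : Set E) : Prop :=
  ∃ C₀ > (0:ℝ), ∀ x ∈ Ω, ∀ y ∈ Λ, ∀ η ξ : E, ⟪η, ξ⟫ = 0 →
    C₀ * ‖η‖ ^ 2 * ‖ξ‖ ^ 2 ≤ cSectional c Λ x y η ξ

/-- `Λ` is `c`-convex with respect to `Ω`: `(cExpₓ)⁻¹(Λ)` is convex for every `x ∈ Ω`. -/
def CConvexTarget (c : E → E → ℝ) (Ω Λ : Set E) : Prop :=
  ∀ x ∈ Ω, Convex ℝ (cExpDom c Λ x)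

/-- `Ω` is `c*`-convex with respect to `Λ`: `(c*Exp_y)⁻¹(Ω)` is convex for every `y ∈ Λ`. -/
def CStarConvexSource (c : E → E → ℝ) (Ω Λ : Set E) : Prop :=
  ∀ y ∈ Λ, Convex ℝ ((fun x => negGradY c x y) '' Ω)

/-- The `c`-Legendre transform `L^c v(x) = sup_{y ∈ Λ} (-c(x,y) - v(y))`. -/
def cTransform (c : E → E → ℝ) (Λ : Set E) (v : E → EReal) (x : E) : EReal :=
  ⨆ y ∈ Λ, (((-(c x y) : ℝ) : EReal) - v y)

/-- `φ` is a `c`-convex function on `Ω` indexed by `Λ`. -/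
def IsCConvexOn (c : E → E → ℝ) (Ω Λ : Set E) (φ : E → ℝ) : Prop :=
  ∃ v : E → EReal,
    (∀ x ∈ Ω, (φ x : EReal) = cTransform c Λ v x) ∧
    (∀ x ∈ Ω, ∃ y ∈ closure Λ, (φ x : EReal) + v y = ((-(c x y) : ℝ) : EReal))

/-- The `c*`-Legendre transform `L^{c*} φ(y) = sup_{x ∈ Ω} (-c(x,y) - φ(x))`. -/
def cStarTransform (c : E → E → ℝ) (Ω : Set E) (φ : E → ℝ) (y : E) : EReal :=
  ⨆ x ∈ Ω, (((-(c x y) - φ x : ℝ)) : EReal)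

/-- The contact set `G_φ(x) = {y ∈ cl Λ : φ(x) + L^{c*}φ(y) = -c(x,y)}`. -/
def contactSet (c : E → E → ℝ) (Ω Λ : Set E) (φ : E → ℝ) (x : E) : Set E :=
  {y ∈ closure Λ | (φ x : EReal) + cStarTransform c Ω φ y = ((-(c x y) : ℝ) : EReal)}

/-- The (local) subdifferential `∂φ(x)`:
`φ(z) ≥ φ(x) + ⟨p, z - x⟩ + o(‖z - x‖)` as `z → x` in `Ω`. -/
def subdiff (Ω : Set E) (φ : E → ℝ) (x : E) : Set E :=
  {p : E | ∀ ε > (0:ℝ), ∀ᶠ z in 𝓝[Ω] x,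
      φ x + ⟪p, z - x⟫ - ε * ‖z - x‖ ≤ φ z}

/-- The `c`-subdifferential `∂^c φ(x) = {-∇ₓ c(x,y) : y ∈ G_φ(x)}`. -/
def cSubdiff (c : E → E → ℝ) (Ω Λ : Set E) (φ : E → ℝ) (x : E) : Set E :=
  (fun y => negGradX c x y) '' contactSet c Ω Λ φ x

/-- The straight segment `p_θ = (1-θ) p₀ + θ p₁` with `pᵢ = -∇ₓ c(x_m, yᵢ)`. -/
def pSeg (c : E → E → ℝ) (xm y₀ y₁ : E) (θ : ℝ) : E :=
  (1 - θ) • negGradX c xm y₀ + θ • negGradX c xm y₁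

/-- The `c`-segment `y_θ = cExp_{x_m}(p_θ)` joining `y₀` to `y₁` with respect to `x_m`. -/
def ySeg (c : E → E → ℝ) (Λ : Set E) (xm y₀ y₁ : E) (θ : ℝ) : E :=
  cExp c Λ xm (pSeg c xm y₀ y₁ θ)

/-- The sliding mountain `f_θ(x) = -c(x, y_θ) + c(x_m, y_θ)`. -/
def slide (c : E → E → ℝ) (Λ : Set E) (xm y₀ y₁ : E) (θ : ℝ) (x : E) : ℝ :=
  -(c x (ySeg c Λ xm y₀ y₁ θ)) + c xm (ySeg c Λ xm y₀ y₁ θ)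

/-- The `c`-segment `[y₀,y₁]_{x_m}` lies in `Λ`:
each `p_θ`, `θ ∈ [0,1]`, is in the domain of `cExp_{x_m}`. -/
def segInTarget (c : E → E → ℝ) (Λ : Set E) (xm y₀ y₁ : E) : Prop :=
  ∀ θ ∈ Set.Icc (0:ℝ) 1, pSeg c xm y₀ y₁ θ ∈ cExpDom c Λ xm

/-- The level set `S_θ = {x ∈ Ω : (d/dθ) f_θ(x) = 0}`. -/
def Slevel (c : E → E → ℝ) (Ω Λ : Set E) (xm y₀ y₁ : E) (θ : ℝ) : Set E :=
  {x ∈ Ω | deriv (fun θ' => slide c Λ xm y₀ y₁ θ' x) θ = 0}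

/-- The super-level set `S⁺_θ = {x ∈ Ω : (d/dθ) f_θ(x) ≥ 0}`. -/
def Splus (c : E → E → ℝ) (Ω Λ : Set E) (xm y₀ y₁ : E) (θ : ℝ) : Set E :=
  {x ∈ Ω | 0 ≤ deriv (fun θ' => slide c Λ xm y₀ y₁ θ' x) θ}


/-!
Fix `x ∈ Ω`, `y ∈ Λ` and `η ⊥ ξ` with `ξ ≠ 0`, put `p = -∇ₓc(x,y)` and
`y_t = c-Expₓ(p + tξ)`; by (A1), (A2) and the inverse function theorem this is a `C³` curve in `Λ`
for small `t`. The `c`-sectional curvature is `g''(0)` for `g(t) = -D²ₓₓc(x,y_t)(η,η)`, so it is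
enough to show that `g` is convex near `0`.

For `a < b` the `c`-segment `[y_a, y_b]ₓ` is `t ↦ y_t` on `[a,b]`. Restrict the sliding mountains
to the parabola `s ↦ x + sη + κs²ξ`: they all vanish at `s = 0`, their first derivatives there all
equal `⟨p + tξ, η⟩ = ⟨p, η⟩` (this is where `η ⊥ ξ` enters), and their second derivatives are
`g(t) + 2κ‖ξ‖² t + 2κ⟨p, ξ⟩`. Since `f_t ≤ max f_a f_b` near `s = 0`, comparing second derivatives
gives `g(t) + λt ≤ max (g(a) + λa) (g(b) + λb)` for every `λ = 2κ‖ξ‖²`, which is convexity of `g`.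
-/

theorem eventually_pos_of_hasDerivAt_of_hasDerivAt_pos {χ D : ℝ → ℝ} {q : ℝ}
    (hχ : ∀ᶠ s in 𝓝 0, HasDerivAt χ (D s) s) (hD : HasDerivAt D q 0)
    (hχ0 : χ 0 = 0) (hD0 : D 0 = 0) (hq : 0 < q) :
    ∀ᶠ s in 𝓝[≠] 0, 0 < χ s := by
  have hsign : ∀ᶠ s in 𝓝[≠] (0 : ℝ), 0 < s * D s := by
    filter_upwards [(hasDerivAt_iff_tendsto_slope.mp hD).eventually (eventually_gt_nhds hq),
      self_mem_nhdsWithin] with s hs hs0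
    rw [slope_def_field, hD0, sub_zero, sub_zero] at hs
    have hs0 : s ≠ 0 := hs0
    have : s * D s = D s / s * s ^ 2 := by field_simp
    rw [this]; positivity
  obtain ⟨ε, hε, hball⟩ := Metric.eventually_nhds_iff.mp
    (hχ.and (eventually_nhdsWithin_iff.mp hsign))
  have hgood : ∀ r ∈ Ioo (-ε) ε, HasDerivAt χ (D r) r ∧ (r ≠ 0 → 0 < r * D r) := fun r hr =>
    hball (by rwa [Real.dist_eq, sub_zero, abs_lt])
  rw [eventually_nhdsWithin_iff, Metric.eventually_nhds_iff]
  refine ⟨ε, hε, fun {s} hs hs0 => ?_⟩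
  obtain ⟨hs₁, hs₂⟩ := abs_lt.mp (by rwa [Real.dist_eq, sub_zero] at hs)
  have hs0 : s ≠ 0 := hs0
  rcases hs0.lt_or_gt with hneg | hpos
  · obtain ⟨r, ⟨hsr, hr0⟩, h⟩ := exists_hasDerivAt_eq_slope χ D hneg
      (fun r hr => (hgood r ⟨by linarith [hr.1], by linarith [hr.2]⟩).1
        |>.continuousAt.continuousWithinAt)
      (fun r hr => (hgood r ⟨by linarith [hr.1], by linarith [hr.2]⟩).1)
    have hDr : D r < 0 := by
      have := (hgood r ⟨by linarith, by linarith⟩).2 hr0.ne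
      nlinarith
    rw [hχ0, eq_div_iff (by linarith)] at h
    nlinarith
  · obtain ⟨r, ⟨hr0, hrs⟩, h⟩ := exists_hasDerivAt_eq_slope χ D hpos
      (fun r hr => (hgood r ⟨by linarith [hr.1], by linarith [hr.2]⟩).1
        |>.continuousAt.continuousWithinAt)
      (fun r hr => (hgood r ⟨by linarith [hr.1], by linarith [hr.2]⟩).1)
    have hDr : 0 < D r := by
      have := (hgood r ⟨by linarith, by linarith⟩).2 hr0.ne'
      nlinarith
    rw [hχ0, eq_div_iff (by linarith)] at h
    nlinarith

theorem le_max_of_eventually_le_max_of_hasDerivAt {φ₀ φ₁ φ D₀ D₁ D : ℝ → ℝ} {q₀ q₁ q : ℝ}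
    (hφ₀ : ∀ᶠ s in 𝓝 0, HasDerivAt φ₀ (D₀ s) s) (hφ₁ : ∀ᶠ s in 𝓝 0, HasDerivAt φ₁ (D₁ s) s)
    (hφ : ∀ᶠ s in 𝓝 0, HasDerivAt φ (D s) s)
    (hD₀ : HasDerivAt D₀ q₀ 0) (hD₁ : HasDerivAt D₁ q₁ 0) (hD : HasDerivAt D q 0)
    (hφ₀0 : φ₀ 0 = φ 0) (hφ₁0 : φ₁ 0 = φ 0) (hD₀0 : D₀ 0 = D 0) (hD₁0 : D₁ 0 = D 0)
    (hle : ∀ᶠ s in 𝓝 0, φ s ≤ max (φ₀ s) (φ₁ s)) :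
    q ≤ max q₀ q₁ := by
  by_contra! hlt
  rw [max_lt_iff] at hlt
  have hgt : ∀ {φᵢ Dᵢ : ℝ → ℝ} {qᵢ : ℝ}, (∀ᶠ s in 𝓝 0, HasDerivAt φᵢ (Dᵢ s) s) →
      HasDerivAt Dᵢ qᵢ 0 → φᵢ 0 = φ 0 → Dᵢ 0 = D 0 → qᵢ < q →
      ∀ᶠ s in 𝓝[≠] 0, 0 < φ s - φᵢ s := fun hφᵢ hDᵢ hφᵢ0 hDᵢ0 hqᵢ =>
    eventually_pos_of_hasDerivAt_of_hasDerivAt_pos (D := fun s => D s - _)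
      (hφ.and hφᵢ |>.mono fun s h => h.1.sub h.2) (hD.sub hDᵢ) (by simp [hφᵢ0])
      (by simp [hDᵢ0]) (sub_pos.mpr hqᵢ)
  obtain ⟨s, ⟨h₀, h₁⟩, hs⟩ := ((hgt hφ₀ hD₀ hφ₀0 hD₀0 hlt.1).and
    (hgt hφ₁ hD₁ hφ₁0 hD₁0 hlt.2)).and (hle.filter_mono nhdsWithin_le_nhds) |>.exists
  rcases max_choice (φ₀ s) (φ₁ s) with h | h <;> rw [h] at hs <;> linarith

theorem convexOn_of_le_max_add_mul {I : Set ℝ} (hI : Convex ℝ I) {g : ℝ → ℝ}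
    (H : ∀ lam : ℝ, ∀ a ∈ I, ∀ b ∈ I, a < b → ∀ t ∈ Icc a b,
      g t + lam * t ≤ max (g a + lam * a) (g b + lam * b)) :
    ConvexOn ℝ I g := by
  refine LinearOrder.convexOn_of_lt hI fun a ha b hb hab μ ν hμ hν hμν => ?_
  -- the slope that makes both endpoint values of `g + lam * id` equal
  set lam := -(g b - g a) / (b - a)
  have hba : b - a ≠ 0 := sub_ne_zero.mpr hab.ne'
  have hends : g a + lam * a = g b + lam * b := by simp only [lam]; field_simp; ring
  have ht : μ • a + ν • b ∈ Icc a b :=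
    segment_subset_Icc hab.le ⟨μ, ν, hμ.le, hν.le, hμν, rfl⟩
  have := H lam a ha b hb hab _ ht
  rw [← hends, max_self] at this
  have hμ' : μ = 1 - ν := by linarith
  simp only [smul_eq_mul, hμ'] at this ⊢
  have key : lam * ((1 - ν) * a + ν * b) = lam * a + ν * (g a - g b) := by
    simp only [lam]; field_simp; ring
  linarith

theorem ConvexOn.deriv_deriv_nonneg {I : Set ℝ} {g : ℝ → ℝ} {x : ℝ} (hg : ConvexOn ℝ I g)
    (hI : I ∈ 𝓝 x) (hg₂ : ContDiffAt ℝ 2 g x) : 0 ≤ deriv (deriv g) x := by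
  have hdiff : ∀ᶠ t in 𝓝 x, DifferentiableAt ℝ g t :=
    (hg₂.eventually (by simp)).mono fun t ht => ht.differentiableAt (by norm_num)
  obtain ⟨l, u, hxlu, hlu⟩ := mem_nhds_iff_exists_Ioo_subset.mp (inter_mem hI hdiff)
  have hmono : MonotoneOn (deriv g) (Ioo l u) :=
    (hg.subset (fun t ht => (hlu ht).1) (convex_Ioo l u)).monotoneOn_deriv
      fun t ht => (hlu ht).2
  have hderiv : HasDerivAt (deriv g) (deriv (deriv g) x) x := by
    have : ContDiffAt ℝ 1 (fun t => fderiv ℝ g t 1) x :=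
      (hg₂.fderiv_right (m := 1) (by norm_num)).clm_apply contDiffAt_const
    exact (this.differentiableAt (by norm_num)).hasDerivAt
  refine ge_of_tendsto ((hasDerivAt_iff_tendsto_slope.mp hderiv).mono_left
    (nhdsGT_le_nhdsNE x)) ?_
  filter_upwards [Ioo_mem_nhdsGT_of_mem ⟨le_rfl, hxlu.2⟩] with t ht
  rw [slope_def_field]
  exact div_nonneg (sub_nonneg.mpr (hmono hxlu ⟨hxlu.1.trans ht.1, ht.2⟩ ht.1.le))
    (sub_nonneg.mpr ht.1.le)

section Parabola

variable {V : Type*} [NormedAddCommGroup V] [NormedSpace ℝ V]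

def parabola (x η ξ : V) (κ s : ℝ) : V := x + s • η + (κ * s ^ 2) • ξ

@[simp]
theorem parabola_zero (x η ξ : V) (κ : ℝ) : parabola x η ξ κ 0 = x := by
  simp [parabola]

theorem hasDerivAt_parabola (x η ξ : V) (κ s : ℝ) :
    HasDerivAt (parabola x η ξ κ) (η + (2 * κ * s) • ξ) s := by
  have := ((hasDerivAt_id s).smul_const η).add (((hasDerivAt_pow 2 s).const_mul κ).smul_const ξ)
    |>.const_add x
  convert this using 1
  · ext s; simp [parabola, add_assoc]
  · simp only [one_smul]; congr 2; push_cast; ring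

theorem continuous_parabola (x η ξ : V) (κ : ℝ) : Continuous (parabola x η ξ κ) := by
  unfold parabola; fun_prop

variable {F : V → ℝ} {x η ξ : V} {κ : ℝ}

theorem eventually_hasDerivAt_comp_parabola (hF : ContDiffAt ℝ 2 F x) :
    ∀ᶠ s in 𝓝 0, HasDerivAt (fun s => F (parabola x η ξ κ s))
      (fderiv ℝ F (parabola x η ξ κ s) (η + (2 * κ * s) • ξ)) s := by
  have hdiff : ∀ᶠ z in 𝓝 x, DifferentiableAt ℝ F z :=
    (hF.eventually (by simp)).mono fun z hz => hz.differentiableAt (by norm_num)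
  have htendsto : Tendsto (parabola x η ξ κ) (𝓝 0) (𝓝 x) := by
    simpa using (continuous_parabola x η ξ κ).tendsto 0
  filter_upwards [htendsto hdiff] with s hs
  exact hs.hasFDerivAt.comp_hasDerivAt s (hasDerivAt_parabola x η ξ κ s)

theorem hasDerivAt_fderiv_comp_parabola (hF : ContDiffAt ℝ 2 F x) :
    HasDerivAt (fun s => fderiv ℝ F (parabola x η ξ κ s) (η + (2 * κ * s) • ξ))
      (fderiv ℝ (fderiv ℝ F) x η η + 2 * κ * fderiv ℝ F x ξ) 0 := by
  have hF' : HasFDerivAt (fderiv ℝ F) (fderiv ℝ (fderiv ℝ F) x) (parabola x η ξ κ 0) := by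
    rw [parabola_zero]
    exact ((hF.fderiv_right (m := 1) (by norm_num)).differentiableAt (by norm_num)).hasFDerivAt
  have hv : HasDerivAt (fun s : ℝ => η + (2 * κ * s) • ξ) ((2 * κ) • ξ) 0 := by
    simpa using (((hasDerivAt_id (0 : ℝ)).const_mul (2 * κ)).smul_const ξ).const_add η
  exact ((hF'.comp_hasDerivAt 0 (hasDerivAt_parabola x η ξ κ 0)).clm_apply hv).congr_deriv
    (by simp)

theorem fderiv_fderiv_add_le_max_of_eventually_le_max {F₀ F₁ : V → ℝ} (κ : ℝ)
    (hF₀ : ContDiffAt ℝ 2 F₀ x) (hF₁ : ContDiffAt ℝ 2 F₁ x) (hF : ContDiffAt ℝ 2 F x)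
    (hd₀ : fderiv ℝ F₀ x η = fderiv ℝ F x η) (hd₁ : fderiv ℝ F₁ x η = fderiv ℝ F x η)
    (hle : ∀ᶠ z in 𝓝 x, F z - F x ≤ max (F₀ z - F₀ x) (F₁ z - F₁ x)) :
    fderiv ℝ (fderiv ℝ F) x η η + 2 * κ * fderiv ℝ F x ξ ≤
      max (fderiv ℝ (fderiv ℝ F₀) x η η + 2 * κ * fderiv ℝ F₀ x ξ)
        (fderiv ℝ (fderiv ℝ F₁) x η η + 2 * κ * fderiv ℝ F₁ x ξ) := by
  have htendsto : Tendsto (parabola x η ξ κ) (𝓝 0) (𝓝 x) := by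
    simpa using (continuous_parabola x η ξ κ).tendsto 0
  refine le_max_of_eventually_le_max_of_hasDerivAt
    (φ₀ := fun s => F₀ (parabola x η ξ κ s) - F₀ x) (φ₁ := fun s => F₁ (parabola x η ξ κ s) - F₁ x)
    (φ := fun s => F (parabola x η ξ κ s) - F x)
    ((eventually_hasDerivAt_comp_parabola hF₀).mono fun s h => h.sub_const _)
    ((eventually_hasDerivAt_comp_parabola hF₁).mono fun s h => h.sub_const _)
    ((eventually_hasDerivAt_comp_parabola hF).mono fun s h => h.sub_const _)
    (hasDerivAt_fderiv_comp_parabola hF₀) (hasDerivAt_fderiv_comp_parabola hF₁)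
    (hasDerivAt_fderiv_comp_parabola hF) (by simp) (by simp) (by simpa using hd₀)
    (by simpa using hd₁) (htendsto hle)

end Parabola

theorem A0.contDiffAt {c : E → E → ℝ} {Ω Λ : Set E} {x y : E} (h0 : A0 c Ω Λ)
    (hΩ : IsOpen Ω) (hΛ : IsOpen Λ) (hx : x ∈ Ω) (hy : y ∈ Λ) :
    ContDiffAt ℝ 4 (fun q : E × E => c q.1 q.2) (x, y) :=
  ContDiffOn.contDiffAt h0 <| Filter.mem_of_superset ((hΩ.prod hΛ).mem_nhds ⟨hx, hy⟩)
    (prod_mono subset_closure subset_closure)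

theorem A0.contDiffAt_left {c : E → E → ℝ} {Ω Λ : Set E} {x y : E} (h0 : A0 c Ω Λ)
    (hΩ : IsOpen Ω) (hΛ : IsOpen Λ) (hx : x ∈ Ω) (hy : y ∈ Λ) :
    ContDiffAt ℝ 4 (fun z => c z y) x :=
  (h0.contDiffAt hΩ hΛ hx hy).comp x (contDiffAt_id.prodMk contDiffAt_const)

theorem A0.contDiffAt_uncurry_swap {c : E → E → ℝ} {Ω Λ : Set E} {x y : E} (h0 : A0 c Ω Λ)
    (hΩ : IsOpen Ω) (hΛ : IsOpen Λ) (hx : x ∈ Ω) (hy : y ∈ Λ) :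
    ContDiffAt ℝ 4 (Function.uncurry fun y' z => c z y') (y, x) :=
  (h0.contDiffAt hΩ hΛ hx hy).comp (y, x) (contDiffAt_snd.prodMk contDiffAt_fst)

theorem A0.contDiffAt_negGradX {c : E → E → ℝ} {Ω Λ : Set E} {x y : E} (h0 : A0 c Ω Λ)
    (hΩ : IsOpen Ω) (hΛ : IsOpen Λ) (hx : x ∈ Ω) (hy : y ∈ Λ) :
    ContDiffAt ℝ 3 (negGradX c x) y := by
  have hP : ContDiffAt ℝ 3 (fun y' => fderiv ℝ (fun z => c z y') x) y :=
    ContDiffAt.fderiv (g := fun _ => x) (h0.contDiffAt_uncurry_swap hΩ hΛ hx hy)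
      contDiffAt_const (by norm_num)
  exact (((InnerProductSpace.toDual ℝ E).symm.toContinuousLinearEquiv.contDiff.contDiffAt).comp
    y hP).neg

theorem A0.contDiffAt_fderiv_fderiv {c : E → E → ℝ} {Ω Λ : Set E} {x y : E} (h0 : A0 c Ω Λ)
    (hΩ : IsOpen Ω) (hΛ : IsOpen Λ) (hx : x ∈ Ω) (hy : y ∈ Λ) :
    ContDiffAt ℝ 2 (fun y' => fderiv ℝ (fderiv ℝ (fun z => c z y')) x) y := by
  have hP : ContDiffAt ℝ 3 (fun q : E × E => fderiv ℝ (fun z => c z q.1) q.2) (y, x) :=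
    ContDiffAt.fderiv (f := fun q z => c z q.1) (g := Prod.snd)
      ((h0.contDiffAt_uncurry_swap hΩ hΛ hx hy).comp ((y, x), x)
        (contDiffAt_fst.fst.prodMk contDiffAt_snd)) contDiffAt_snd (by norm_num)
  exact ContDiffAt.fderiv (g := fun _ => x)
    (f := fun y' z => fderiv ℝ (fun z' => c z' y') z) hP contDiffAt_const (by norm_num)

theorem fderiv_apply_eq_neg_inner_negGradX (c : E → E → ℝ) (x y v : E) :
    fderiv ℝ (fun z => c z y) x v = -⟪negGradX c x y, v⟫ := by
  rw [negGradX, gradient, inner_neg_left, InnerProductSpace.toDual_symm_apply, neg_neg]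

theorem cExp_negGradX {c : E → E → ℝ} {Ω Λ : Set E} {x y : E} (h1 : A1 c Ω Λ) (hx : x ∈ Ω)
    (hy : y ∈ Λ) : cExp c Λ x (negGradX c x y) = y :=
  haveI : Nonempty E := ⟨y⟩
  ((h1.1 x hx).mono subset_closure).leftInvOn_invFunOn hy

theorem eventually_cExp {c : E → E → ℝ} {Ω Λ : Set E} {x y : E} (h0 : A0 c Ω Λ)
    (h1 : A1 c Ω Λ) (h2 : A2 c Ω Λ) (hΩ : IsOpen Ω) (hΛ : IsOpen Λ) (hx : x ∈ Ω) (hy : y ∈ Λ) :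
    ∀ᶠ q in 𝓝 (negGradX c x y), cExp c Λ x q ∈ Λ ∧ negGradX c x (cExp c Λ x q) = q ∧
      ContDiffAt ℝ 3 (cExp c Λ x) q := by
  have hN := h0.contDiffAt_negGradX hΩ hΛ hx hy
  let L : E ≃L[ℝ] E := (LinearEquiv.ofBijective (fderiv ℝ (negGradX c x) y : E →ₗ[ℝ] E)
    (h2 x (subset_closure hx) y (subset_closure hy))).toContinuousLinearEquiv
  have hL : HasFDerivAt (negGradX c x) (L : E →L[ℝ] E) y :=
    (hN.differentiableAt (by norm_num)).hasFDerivAt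
  have h3 : (3 : WithTop ℕ∞) ≠ 0 := by norm_num
  have hstrict := hN.hasStrictFDerivAt' hL h3
  set ℓ := hN.localInverse hL h3
  have hℓ : ∀ᶠ q in 𝓝 (negGradX c x y), ℓ q ∈ Λ ∧ negGradX c x (ℓ q) = q :=
    Filter.Eventually.and (hstrict.localInverse_tendsto (hΛ.mem_nhds hy))
      hstrict.eventually_right_inverse
  have hcExp : cExp c Λ x =ᶠ[𝓝 (negGradX c x y)] ℓ := hℓ.mono fun q hq => by
    conv_lhs => rw [← hq.2]
    exact cExp_negGradX h1 hx hq.1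
  filter_upwards [hℓ, hcExp, hcExp.eventuallyEq_nhds,
    (hN.to_localInverse hL h3).eventually (by simp)] with q hq hq' hq'' hsmooth
  exact ⟨hq' ▸ hq.1, hq' ▸ hq.2, hsmooth.congr_of_eventuallyEq hq''⟩

def DASMNear (c : E → E → ℝ) (Ω Λ : Set E) (xm : E) : Prop :=
  ∀ y₀ ∈ Λ, ∀ y₁ ∈ Λ, segInTarget c Λ xm y₀ y₁ →
    ∃ U : Set E, IsOpen U ∧ xm ∈ U ∧ U ⊆ Ω ∧
      ∀ θ ∈ Set.Icc (0:ℝ) 1, ∀ x ∈ U,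
        slide c Λ xm y₀ y₁ θ x ≤ max (slide c Λ xm y₀ y₁ 0 x) (slide c Λ xm y₀ y₁ 1 x)

theorem convexOn_neg_fderiv_fderiv_of_dasmNear {c : E → E → ℝ} {Ω Λ : Set E} {x p η ξ : E}
    {I : Set ℝ} {Y : ℝ → E} (h1 : A1 c Ω Λ) (hx : x ∈ Ω) (hDASM : DASMNear c Ω Λ x)
    (hC : ∀ y ∈ Λ, ContDiffAt ℝ 2 (fun z => c z y) x) (hI : Convex ℝ I)
    (hY : ∀ τ ∈ I, Y τ ∈ Λ ∧ negGradX c x (Y τ) = p + τ • ξ)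
    (hηξ : ⟪η, ξ⟫ = 0) (hξ : ξ ≠ 0) :
    ConvexOn ℝ I fun τ => -fderiv ℝ (fderiv ℝ fun z => c z (Y τ)) x η η := by
  refine convexOn_of_le_max_add_mul hI fun lam a ha b hb hab t ht => ?_
  have hmem : ∀ θ ∈ Icc (0:ℝ) 1, (1 - θ) * a + θ * b ∈ I := fun θ hθ =>
    hI.segment_subset ha hb (by rw [segment_eq_image]; exact ⟨θ, hθ, rfl⟩)
  have hpSeg : ∀ θ ∈ Icc (0:ℝ) 1,
      pSeg c x (Y a) (Y b) θ = negGradX c x (Y ((1 - θ) * a + θ * b)) := fun θ hθ => by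
    rw [pSeg, (hY a ha).2, (hY b hb).2, (hY _ (hmem θ hθ)).2]
    module
  have hySeg : ∀ θ ∈ Icc (0:ℝ) 1, ySeg c Λ x (Y a) (Y b) θ = Y ((1 - θ) * a + θ * b) :=
    fun θ hθ => by rw [ySeg, hpSeg θ hθ, cExp_negGradX h1 hx (hY _ (hmem θ hθ)).1]
  obtain ⟨U, hU, hxU, -, hslide⟩ := hDASM (Y a) (hY a ha).1 (Y b) (hY b hb).1
    fun θ hθ => ⟨_, (hY _ (hmem θ hθ)).1, (hpSeg θ hθ).symm⟩
  rw [← segment_eq_Icc hab.le, segment_eq_image] at ht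
  obtain ⟨θ, hθ, rfl⟩ := ht
  simp only [smul_eq_mul]
  have hle : ∀ᶠ z in 𝓝 x, -c z (Y ((1 - θ) * a + θ * b)) - -c x (Y ((1 - θ) * a + θ * b)) ≤
      max (-c z (Y a) - -c x (Y a)) (-c z (Y b) - -c x (Y b)) := by
    filter_upwards [hU.mem_nhds hxU] with z hz
    have := hslide θ hθ z hz
    simp only [slide, hySeg θ hθ, hySeg 0 ⟨le_rfl, zero_le_one⟩, hySeg 1 ⟨zero_le_one, le_rfl⟩,
      sub_zero, sub_self, one_mul, zero_mul, add_zero, zero_add] at this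
    simpa only [sub_neg_eq_add] using this
  have hneg : ∀ y : E, fderiv ℝ (fun z => -c z y) = -fderiv ℝ (fun z => c z y) :=
    fun y => funext fun _ => fderiv_fun_neg
  have hfirst : ∀ τ ∈ I, ∀ v, fderiv ℝ (fun z => -c z (Y τ)) x v = ⟪p + τ • ξ, v⟫ :=
    fun τ hτ v => by
      rw [fderiv_fun_neg, neg_apply, fderiv_apply_eq_neg_inner_negGradX, (hY τ hτ).2,
        neg_neg]
  have hslope : ∀ τ ∈ I, fderiv ℝ (fun z => -c z (Y τ)) x η = ⟪p, η⟫ := fun τ hτ => by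
    rw [hfirst τ hτ, inner_add_left, real_inner_smul_left, real_inner_comm η ξ, hηξ, mul_zero,
      add_zero]
  -- then the acceleration term `2κ⟪p + τ • ξ, ξ⟫` of the parabola contributes `lam * τ`
  set κ := lam / (2 * ‖ξ‖ ^ 2)
  have hval : ∀ τ ∈ I, fderiv ℝ (fderiv ℝ fun z => -c z (Y τ)) x η η +
      2 * κ * fderiv ℝ (fun z => -c z (Y τ)) x ξ =
      -fderiv ℝ (fderiv ℝ fun z => c z (Y τ)) x η η + lam * τ + 2 * κ * ⟪p, ξ⟫ :=
    fun τ hτ => by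
      have : ‖ξ‖ ≠ 0 := norm_ne_zero_iff.mpr hξ
      rw [hfirst τ hτ, hneg, fderiv_neg, neg_apply, neg_apply, inner_add_left,
        real_inner_smul_left, real_inner_self_eq_norm_sq]
      simp only [κ]; field_simp; ring
  have := fderiv_fderiv_add_le_max_of_eventually_le_max (ξ := ξ) κ (hC _ (hY a ha).1).neg
    (hC _ (hY b hb).1).neg (hC _ (hY _ (hmem θ hθ)).1).neg
    ((hslope a ha).trans (hslope _ (hmem θ hθ)).symm)
    ((hslope b hb).trans (hslope _ (hmem θ hθ)).symm) hle
  rw [hval a ha, hval b hb, hval _ (hmem θ hθ), max_add_add_right] at this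
  linarith

theorem contDiffAt_fderiv_fderiv_cExp {c : E → E → ℝ} {Ω Λ : Set E} {x y : E} (h0 : A0 c Ω Λ)
    (h1 : A1 c Ω Λ) (h2 : A2 c Ω Λ) (hΩ : IsOpen Ω) (hΛ : IsOpen Λ) (hx : x ∈ Ω) (hy : y ∈ Λ)
    (η ξ : E) :
    ContDiffAt ℝ 2 (fun t : ℝ =>
      fderiv ℝ (fderiv ℝ fun z => c z (cExp c Λ x (negGradX c x y + t • ξ))) x η η) 0 := by
  have hY0 : cExp c Λ x (negGradX c x y + (0 : ℝ) • ξ) = y := by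
    rw [zero_smul, add_zero, cExp_negGradX h1 hx hy]
  have hY : ContDiffAt ℝ 3 (fun t : ℝ => cExp c Λ x (negGradX c x y + t • ξ)) 0 := by
    refine ContDiffAt.comp (g := cExp c Λ x) 0 ?_
      (contDiffAt_const.add (contDiffAt_id.smul contDiffAt_const))
    simpa using (eventually_cExp h0 h1 h2 hΩ hΛ hx hy).self_of_nhds.2.2
  have hH := h0.contDiffAt_fderiv_fderiv hΩ hΛ hx hy
  rw [← hY0] at hH
  exact ((hH.comp 0 (hY.of_le (by norm_num))).clm_apply contDiffAt_const).clm_apply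
    contDiffAt_const

theorem statement16 (c : E → E → ℝ) (Ω Λ : Set E) (hΩ : IsOpen Ω) (hΛ : IsOpen Λ)
    (h0 : A0 c Ω Λ) (h1 : A1 c Ω Λ) (h2 : A2 c Ω Λ)
    (hDASMloc : ∀ xm ∈ Ω, ∀ y₀ ∈ Λ, ∀ y₁ ∈ Λ, segInTarget c Λ xm y₀ y₁ →
      ∃ U : Set E, IsOpen U ∧ xm ∈ U ∧ U ⊆ Ω ∧
        ∀ θ ∈ Set.Icc (0:ℝ) 1, ∀ x ∈ U,
          slide c Λ xm y₀ y₁ θ x ≤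
            max (slide c Λ xm y₀ y₁ 0 x) (slide c Λ xm y₀ y₁ 1 x)) :
    A3W c Ω Λ := by
  intro x hx y hy η ξ hηξ
  rcases eq_or_ne ξ 0 with rfl | hξ
  · simp [cSectional]
  set p := negGradX c x y
  have hline : Tendsto (fun t : ℝ => p + t • ξ) (𝓝 0) (𝓝 p) := by
    have : Continuous fun t : ℝ => p + t • ξ := by fun_prop
    simpa using this.tendsto 0
  obtain ⟨l, u, h0lu, hlu⟩ := mem_nhds_iff_exists_Ioo_subset.mp
    (hline.eventually (eventually_cExp h0 h1 h2 hΩ hΛ hx hy))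
  have hconv := convexOn_neg_fderiv_fderiv_of_dasmNear (Y := fun τ => cExp c Λ x (p + τ • ξ))
    h1 hx (hDASMloc x hx) (fun y' hy' => (h0.contDiffAt_left hΩ hΛ hx hy').of_le (by norm_num))
    (convex_Ioo l u) (fun τ hτ => ⟨(hlu hτ).1, (hlu hτ).2.1⟩) hηξ hξ
  have := hconv.deriv_deriv_nonneg (isOpen_Ioo.mem_nhds h0lu)
    (contDiffAt_fderiv_fderiv_cExp h0 h1 h2 hΩ hΛ hx hy η ξ).neg
  simpa [cSectional, iteratedFDeriv_two_apply] using this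

end
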